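/- arXiv:math/0606333 — 5 statements merged into one kernel-verified Lean document; each statement's English description precedes it below -/
import Mathlib

section
/- Let M be a unital C*-algebra over ℂ, G an additively written abelian group, α : G → (M ≃⋆ M) a group homomorphism into the *-algebra automorphisms of M, c : G × G → 𝕋 a function with c(0,y) = c(x,0) = 1 for all x, y, and U : G → M a map whose values are unitary elements of M, such that (i) U(x+y) = conj(c(x,y)) • (U(x) * α(x)(U(y))) for all x, y ∈ G, and (ii) any two elements of the family {α(x)(U(y)) : x, y ∈ G} commute. Define β(x)(m) = star(U(x)) * α(x)(m) * U(x) for m ∈ M. Then β(0) is the identity map of M and β(x+y)(m) = β(x)(β(y)(m)) for all x, y ∈ G and m ∈ M; in particular each β(x) is a *-algebra automorphism of M and β is a group action of G on M. -/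
/-!
The cocycle identity writes `U (x + y)` as a phase times `U x * α x (U y)`. Conjugation by a
unitary is insensitive to a scalar phase of modulus one, and since `U x` and `α x (U y)`
commute, conjugating by their product is conjugating first by `α x (U y)` and then by `U x`,
which is exactly `β x ∘ β y`. Normalisation of the cocycle makes `U 0` a unitary idempotent,
hence `1`.
-/

section Conjugation

variable {A : Type*}

theorem eq_one_of_mem_unitary_of_mul_self [Monoid A] [StarMul A] {u : A}
    (hu : u ∈ unitary A) (h : u * u = u) : u = 1 :=
  (IsIdempotentElem.iff_eq_one_of_isUnit (Unitary.isUnit_coe (U := ⟨u, hu⟩))).mp h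

theorem star_mul_mul_mul_of_commute [Monoid A] [StarMul A] {u v : A} (h : Commute u v)
    (m : A) : star (u * v) * m * (u * v) = star u * (star v * m * v) * u := by
  rw [h.eq, star_mul]
  simp only [mul_assoc]

theorem star_smul_mul_mul_smul {R : Type*} [CommSemiring R] [StarRing R] [Semiring A]
    [StarRing A] [Module R A] [IsScalarTower R A A] [SMulCommClass R A A] [StarModule R A]
    {z : R} (hz : star z * z = 1) (a m : A) :
    star (z • a) * m * (z • a) = star a * m * a := by
  rw [star_smul, smul_mul_assoc, smul_mul_assoc, mul_smul_comm, smul_smul, hz, one_smul]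

end Conjugation

theorem twisted_action_is_action_general
    {M : Type*} [NormedRing M] [StarRing M]
    [NormedAlgebra ℂ M] [StarModule ℂ M]
    {G : Type*} [AddCommGroup G]
    (α : G → (M ≃⋆ₐ[ℂ] M))
    (hα0 : ∀ m : M, α 0 m = m)
    (hαadd : ∀ x y : G, ∀ m : M, α (x + y) m = α x (α y m))
    (c : G → G → ℂ)
    (hcmod : ∀ x y : G, ‖c x y‖ = 1)
    (hc0 : ∀ y : G, c 0 y = 1)
    (U : G → M)
    (hU : ∀ x : G, U x ∈ unitary M)
    (hUcoc : ∀ x y : G, U (x + y) = (starRingEnd ℂ) (c x y) • (U x * α x (U y)))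
    (hcomm : ∀ x y x' y' : G, Commute (α x (U y)) (α x' (U y')))
    (β : G → M → M)
    (hβ : ∀ (x : G) (m : M), β x m = star (U x) * α x m * U x) :
    (∀ m : M, β 0 m = m) ∧
      (∀ (x y : G) (m : M), β (x + y) m = β x (β y m)) := by
  have hU0 : U 0 = 1 :=
    eq_one_of_mem_unitary_of_mul_self (hU 0) (by simpa [hc0, hα0] using (hUcoc 0 0).symm)
  refine ⟨fun m => by rw [hβ, hU0, star_one, one_mul, mul_one, hα0], fun x y m => ?_⟩
  have hphase : star (starRingEnd ℂ (c x y)) * starRingEnd ℂ (c x y) = 1 := by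
    simp [Complex.mul_conj', hcmod]
  have hUx : Commute (U x) (α x (U y)) := by simpa only [hα0] using hcomm 0 x x y
  rw [hβ, hUcoc, hαadd, star_smul_mul_mul_smul hphase, star_mul_mul_mul_of_commute hUx, hβ, hβ,
    map_mul, map_mul, map_star]

/-- Twisting a group action `α` of an abelian group `G` on a unital C*-algebra `M`
by a family of unitaries `U` coming from a `𝕋`-valued 2-cocycle `c` (with the
values `α x (U y)` pairwise commuting) yields again an action:
`β x m = star (U x) * α x m * U x` satisfies `β 0 = id` and
`β (x + y) = β x ∘ β y`. -/
theorem twisted_action_is_action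
    {M : Type*} [NormedRing M] [StarRing M] [CStarRing M] [CompleteSpace M]
    [NormedAlgebra ℂ M] [StarModule ℂ M]
    {G : Type*} [AddCommGroup G]
    (α : G → (M ≃⋆ₐ[ℂ] M))
    (hα0 : ∀ m : M, α 0 m = m)
    (hαadd : ∀ x y : G, ∀ m : M, α (x + y) m = α x (α y m))
    (c : G → G → ℂ)
    (hcmod : ∀ x y : G, ‖c x y‖ = 1)
    (hc0 : ∀ y : G, c 0 y = 1) (hc0' : ∀ x : G, c x 0 = 1)
    (U : G → M)
    (hU : ∀ x : G, U x ∈ unitary M)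
    (hUcoc : ∀ x y : G, U (x + y) = (starRingEnd ℂ) (c x y) • (U x * α x (U y)))
    (hcomm : ∀ x y x' y' : G, Commute (α x (U y)) (α x' (U y')))
    (β : G → M → M)
    (hβ : ∀ (x : G) (m : M), β x m = star (U x) * α x m * U x) :
    (∀ m : M, β 0 m = m) ∧
      (∀ (x y : G) (m : M), β (x + y) m = β x (β y m)) :=
  twisted_action_is_action_general α hα0 hαadd c hcmod hc0 U hU hUcoc hcomm β hβ
end

section
/- Let M be a unital C*-algebra over ℂ, G an additively written abelian group, α : G → (M ≃⋆ M) a group homomorphism into the *-algebra automorphisms of M, f : G → 𝕋 a function, and F a unitary element of M such that F commutes with α(x)(F) for every x ∈ G. For x ∈ G set U(x) = conj(f(x)) • (star(F) * α(x)(F)). Then for every a ∈ M satisfying α(x)(a) = a for all x ∈ G, one has star(U(x)) * α(x)(F * a * star(F)) * U(x) = F * a * star(F) for all x ∈ G. -/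
theorem Commute.star_right_of_mem_unitary {R : Type*} [Monoid R] [StarMul R] {u x : R}
    (hu : u ∈ unitary R) (h : Commute u x) : Commute u (star x) := by
  rw [commute_unitary_iff_star_left_conjugate hu] at h ⊢
  simpa [mul_assoc] using congrArg star h

theorem star_smul_mul_mul_smul_of_star_mul_self {R A : Type*} [CommSemiring R] [StarRing R]
    [Semiring A] [StarRing A] [Algebra R A] [StarModule R A] {c : R} (hc : star c * c = 1)
    (v y : A) : star (c • v) * y * (c • v) = star v * y * v := by
  rw [star_smul, smul_mul_assoc, smul_mul_assoc, mul_smul_comm, smul_smul, hc, one_smul]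

theorem star_mul_conj_mul_eq_conj_of_commute {R : Type*} [Monoid R] [StarMul R] {u x : R}
    (hu : u ∈ unitary R) (h : Commute u x) (a : R) :
    star (star x * u) * (u * a * star u) * (star x * u) = x * a * star x := by
  have hx := (commute_unitary_iff_star_left_conjugate hu).mp h
  have hxstar := (commute_unitary_iff_star_left_conjugate hu).mp (h.star_right_of_mem_unitary hu)
  calc star (star x * u) * (u * a * star u) * (star x * u)
      = (star u * x * u) * a * (star u * star x * u) := by simp only [star_mul, star_star, mul_assoc]
    _ = x * a * star x := by rw [hx, hxstar]

theorem trivial_cocycle_invariance_general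
    {M : Type*} [NormedRing M] [StarRing M]
    [NormedAlgebra ℂ M] [StarModule ℂ M]
    {G : Type*}
    (α : G → (M ≃⋆ₐ[ℂ] M))
    (f : G → ℂ) (hf : ∀ x : G, ‖f x‖ = 1)
    (F : M) (hF : F ∈ unitary M)
    (hFcomm : ∀ x : G, Commute F (α x F))
    (U : G → M)
    (hU : ∀ x : G, U x = (starRingEnd ℂ) (f x) • (star F * α x F))
    (a : M) (ha : ∀ x : G, α x a = a) :
    ∀ x : G, star (U x) * α x (F * a * star F) * U x = F * a * star F := by
  intro x
  have hfx : star ((starRingEnd ℂ) (f x)) * (starRingEnd ℂ) (f x) = 1 := by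
    rw [Complex.star_def, Complex.conj_conj, Complex.mul_conj', hf x, Complex.ofReal_one, one_pow]
  have hαx : α x (F * a * star F) = α x F * a * star (α x F) := by
    rw [map_mul, map_mul, ha, map_star]
  rw [hU, hαx, star_smul_mul_mul_smul_of_star_mul_self hfx,
    star_mul_conj_mul_eq_conj_of_commute (Unitary.map_mem (α x) hF) (hFcomm x).symm]

/-- For a trivial 2-cocycle `∂f`, the twisting unitaries have the form
`U x = conj (f x) • (star F * α x F)`, and any element of the form `F * a * star F`
with `a` invariant under `α` is invariant under the twisted action. -/
theorem trivial_cocycle_invariance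
    {M : Type*} [NormedRing M] [StarRing M] [CStarRing M] [CompleteSpace M]
    [NormedAlgebra ℂ M] [StarModule ℂ M]
    {G : Type*} [AddCommGroup G]
    (α : G → (M ≃⋆ₐ[ℂ] M))
    (hα0 : ∀ m : M, α 0 m = m)
    (hαadd : ∀ x y : G, ∀ m : M, α (x + y) m = α x (α y m))
    (f : G → ℂ) (hf : ∀ x : G, ‖f x‖ = 1)
    (F : M) (hF : F ∈ unitary M)
    (hFcomm : ∀ x : G, Commute F (α x F))
    (U : G → M)
    (hU : ∀ x : G, U x = (starRingEnd ℂ) (f x) • (star F * α x F))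
    (a : M) (ha : ∀ x : G, α x a = a) :
    ∀ x : G, star (U x) * α x (F * a * star F) * U x = F * a * star F :=
  trivial_cocycle_invariance_general α f hf F hF hFcomm U hU a ha
end

section
/- Let G be a locally compact Hausdorff abelian topological group and let I be a closed ideal of the ring C₀(G, ℂ) of continuous complex-valued functions on G vanishing at infinity. Assume I is translation invariant, i.e. for every γ ∈ G and every f ∈ I the translated function x ↦ f(x + γ) belongs to I. If I ≠ C₀(G, ℂ), then I = {0}. -/
/-!
Translating a nonzero element of `I` shows that the functions in `I` have no common zero, and a
closed ideal of `C₀(X, ℂ)` without common zeros is everything. Indeed, given `h` and `ε`, let `K`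
be a compact set off which `|h| < ε`. By compactness of `K`, a finite sum `g = ∑ conj gᵢ * gᵢ`
of elements of `I` satisfies `|g| ≥ c > 0` on `K`; then `h * conj g / (|g|² + δ)` times `g`
lies in `I` and differs from `h` by `h * δ / (|g|² + δ)`, which is uniformly small for small `δ`.
-/

open ZeroAtInfty Filter ComplexConjugate

namespace ZeroAtInftyContinuousMap

variable {X : Type*} [TopologicalSpace X]

theorem coe_sum {β ι : Type*} [TopologicalSpace β] [AddCommMonoid β] [ContinuousAdd β]
    (s : Finset ι) (F : ι → C₀(X, β)) : ⇑(∑ i ∈ s, F i) = ∑ i ∈ s, ⇑(F i) :=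
  map_sum (⟨⟨DFunLike.coe, coe_zero⟩, coe_add⟩ : C₀(X, β) →+ (X → β)) F s

theorem norm_apply_le {β : Type*} [NormedAddCommGroup β] (f : C₀(X, β)) (x : X) :
    ‖f x‖ ≤ ‖f‖ :=
  f.toBCF.norm_coe_le_norm x

theorem norm_le_of_forall_norm_apply_le {β : Type*} [NormedAddCommGroup β] (f : C₀(X, β))
    {C : ℝ} (hC : 0 ≤ C) (hf : ∀ x, ‖f x‖ ≤ C) : ‖f‖ ≤ C :=
  (BoundedContinuousFunction.norm_le hC).2 hf

/-- Tends to `h / g` off the zeros of `g` as `δ → 0`. -/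
noncomputable def regularizedDiv (h g : C₀(X, ℂ)) {δ : ℝ} (hδ : 0 < δ) : C₀(X, ℂ) where
  toFun x := h x * conj (g x) / ((‖g x‖ ^ 2 + δ : ℝ) : ℂ)
  continuous_toFun :=
    (h.continuous.mul (Complex.continuous_conj.comp g.continuous)).div
      (Complex.continuous_ofReal.comp ((g.continuous.norm.pow 2).add continuous_const))
      fun x => Complex.ofReal_ne_zero.2 (by positivity)
  zero_at_infty' := by
    refine squeeze_zero_norm (fun x => ?_)
      (by simpa using h.zero_at_infty'.norm.mul_const (‖g‖ / δ))
    have hden : 0 ≤ ‖g x‖ ^ 2 + δ := by positivity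
    rw [norm_div, norm_mul, Complex.norm_conj, Complex.norm_real, Real.norm_of_nonneg hden,
      mul_div_assoc]
    gcongr
    · exact g.norm_apply_le x
    · exact le_add_of_nonneg_left (by positivity)

theorem sub_regularizedDiv_mul_apply (h g : C₀(X, ℂ)) {δ : ℝ} (hδ : 0 < δ) (x : X) :
    h x - (regularizedDiv h g hδ * g) x = h x * ((δ / (‖g x‖ ^ 2 + δ) : ℝ) : ℂ) := by
  have hden : ((‖g x‖ ^ 2 + δ : ℝ) : ℂ) ≠ 0 := Complex.ofReal_ne_zero.2 (by positivity)
  simp only [mul_apply, regularizedDiv, coe_mk, Complex.ofReal_div]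
  rw [mul_div_right_comm, mul_assoc, Complex.conj_mul']
  field_simp
  push_cast
  ring

theorem exists_norm_sub_mul_le {h g : C₀(X, ℂ)} {K : Set X} {ε c : ℝ} (hε : 0 < ε) (hc : 0 < c)
    (hg : ∀ x ∈ K, c ≤ ‖g x‖) (hh : ∀ x ∉ K, ‖h x‖ ≤ ε) : ∃ w : C₀(X, ℂ), ‖h - w * g‖ ≤ ε := by
  set δ := c ^ 2 * ε / (‖h‖ + 1)
  have hδ : 0 < δ := by positivity
  refine ⟨regularizedDiv h g hδ, norm_le_of_forall_norm_apply_le _ hε.le fun x => ?_⟩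
  rw [sub_apply, sub_regularizedDiv_mul_apply, norm_mul, Complex.norm_real,
    Real.norm_of_nonneg (by positivity)]
  by_cases hx : x ∈ K
  · calc ‖h x‖ * (δ / (‖g x‖ ^ 2 + δ)) ≤ ‖h‖ * (δ / c ^ 2) := by
          gcongr
          · exact h.norm_apply_le x
          · nlinarith [hg x hx]
      _ = ε * (‖h‖ / (‖h‖ + 1)) := by simp only [δ]; field_simp
      _ ≤ ε := mul_le_of_le_one_right hε.le ((div_le_one (by positivity)).2 (by linarith))
  · calc ‖h x‖ * (δ / (‖g x‖ ^ 2 + δ)) ≤ ‖h x‖ * 1 := by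
          gcongr
          exact (div_le_one (by positivity)).2 (le_add_of_nonneg_left (by positivity))
      _ ≤ ε := by simpa using hh x hx

section Ideal

variable {I : Set C₀(X, ℂ)} (hzero : 0 ∈ I) (hadd : ∀ f ∈ I, ∀ g ∈ I, f + g ∈ I)
  (hmul : ∀ f ∈ I, ∀ g : C₀(X, ℂ), g * f ∈ I)
include hzero hadd hmul

theorem exists_mem_forall_ne_zero_of_isCompact {K : Set X} (hK : IsCompact K)
    (hI : ∀ x ∈ K, ∃ g ∈ I, g x ≠ 0) : ∃ g ∈ I, ∀ x ∈ K, g x ≠ 0 := by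
  choose g hgI hg using hI
  obtain ⟨t, ht⟩ := hK.elim_nhds_subcover' (fun y hy => {x | g y hy x ≠ 0})
    fun y hy => (isOpen_ne_fun (g y hy).continuous continuous_const).mem_nhds (hg y hy)
  refine ⟨∑ y ∈ t, star (g y y.2) * g y y.2,
    Finset.sum_induction _ (· ∈ I) (fun a b ha hb => hadd a ha b hb) hzero
      fun y _ => hmul _ (hgI y y.2) _, fun x hx => ?_⟩
  obtain ⟨y, hyt, hyx⟩ := Set.mem_iUnion₂.1 (ht hx)
  have hsum : (∑ y ∈ t, star (g y y.2) * g y y.2) x = ((∑ y ∈ t, ‖g y y.2 x‖ ^ 2 : ℝ) : ℂ) := by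
    simp only [coe_sum, Finset.sum_apply, mul_apply, star_apply, Complex.star_def,
      Complex.conj_mul', Complex.ofReal_sum, Complex.ofReal_pow]
  rw [hsum, Complex.ofReal_ne_zero]
  exact (Finset.sum_pos' (fun _ _ => by positivity) ⟨y, hyt, pow_pos (norm_pos_iff.2 hyx) 2⟩).ne'

theorem eq_univ_of_isClosed_of_forall_exists_ne_zero (hclosed : IsClosed I)
    (hI : ∀ x, ∃ g ∈ I, g x ≠ 0) : I = Set.univ := by
  refine Set.eq_univ_of_forall fun h =>
    hclosed.closure_subset (Metric.mem_closure_iff.2 fun ε hε => ?_)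
  obtain ⟨K, hK, hKh⟩ : ∃ K, IsCompact K ∧ ∀ x ∉ K, ‖h x‖ < ε / 2 := by
    obtain ⟨K, hK, hKs⟩ := mem_cocompact.1 ((tendsto_order.1 h.zero_at_infty'.norm).2 (ε / 2)
      (by simpa using half_pos hε))
    exact ⟨K, hK, fun x hx => hKs hx⟩
  obtain ⟨g, hgI, hg⟩ := exists_mem_forall_ne_zero_of_isCompact hzero hadd hmul hK fun x _ => hI x
  obtain ⟨c, hc, hcg⟩ := hK.exists_forall_le' g.continuous.norm.continuousOn
    fun x hx => norm_pos_iff.2 (hg x hx)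
  obtain ⟨w, hw⟩ := exists_norm_sub_mul_le (half_pos hε) hc hcg fun x hx => (hKh x hx).le
  exact ⟨w * g, hmul g hgI w, by rw [dist_eq_norm]; linarith⟩

end Ideal

end ZeroAtInftyContinuousMap

open ZeroAtInftyContinuousMap in
theorem translation_invariant_proper_closed_ideal_eq_bot_general
    {G : Type*} [AddCommGroup G] [TopologicalSpace G] [IsTopologicalAddGroup G]
    (I : Set C₀(G, ℂ))
    (hclosed : IsClosed I)
    (hzero : (0 : C₀(G, ℂ)) ∈ I)
    (hadd : ∀ f ∈ I, ∀ g ∈ I, f + g ∈ I)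
    (hmul_left : ∀ f ∈ I, ∀ g : C₀(G, ℂ), g * f ∈ I)
    (htrans : ∀ γ : G, ∀ f ∈ I,
      f.comp (Homeomorph.addRight γ).toCocompactMap ∈ I)
    (hproper : I ≠ Set.univ) :
    I = {0} := by
  by_contra hne
  obtain ⟨f, hfI, hf⟩ : ∃ f ∈ I, f ≠ 0 := by
    by_contra! h
    exact hne (Set.eq_singleton_iff_unique_mem.2 ⟨hzero, h⟩)
  obtain ⟨x₀, hx₀⟩ := DFunLike.ne_iff.1 hf
  refine hproper (eq_univ_of_isClosed_of_forall_exists_ne_zero hzero hadd hmul_left hclosed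
    fun y => ⟨_, htrans (x₀ - y) f hfI, ?_⟩)
  change f (y + (x₀ - y)) ≠ 0
  simpa using hx₀

/-- A closed, translation-invariant, proper ideal of `C₀(G, ℂ)` on a locally compact
Hausdorff abelian topological group `G` is trivial. -/
theorem translation_invariant_proper_closed_ideal_eq_bot
    {G : Type*} [AddCommGroup G] [TopologicalSpace G] [IsTopologicalAddGroup G]
    [T2Space G] [LocallyCompactSpace G]
    (I : Set C₀(G, ℂ))
    (hclosed : IsClosed I)
    (hzero : (0 : C₀(G, ℂ)) ∈ I)
    (hadd : ∀ f ∈ I, ∀ g ∈ I, f + g ∈ I)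
    (hneg : ∀ f ∈ I, -f ∈ I)
    (hmul_left : ∀ f ∈ I, ∀ g : C₀(G, ℂ), g * f ∈ I)
    (hmul_right : ∀ f ∈ I, ∀ g : C₀(G, ℂ), f * g ∈ I)
    (htrans : ∀ γ : G, ∀ f ∈ I,
      f.comp (Homeomorph.addRight γ).toCocompactMap ∈ I)
    (hproper : I ≠ Set.univ) :
    I = {0} :=
  translation_invariant_proper_closed_ideal_eq_bot_general I hclosed hzero hadd hmul_left htrans
    hproper
end

section
/- Let G be an additively written abelian group and let Ψ : G × G → 𝕋 be a 2-cocycle on G. Define Ψ⋆(x, y) = conj(Ψ(x, −x − y)) and Ψ̃(x, y) = conj(Ψ(−x, −y)). Then for all x, y, z ∈ G: Ψ⋆(x, y + z) = Ψ̃(y, z) · conj(Ψ̃(x + y, z)) · Ψ⋆(x, y). -/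
/-! Apply the cocycle identity to `(x, -x - y, -z)`, so that its two sides carry
`Ψ (x, -x - y - z)` and `Ψ (-y, -z)`; conjugating and cancelling the unimodular
factor `Ψ (-x - y, -z)` gives the identity. -/

open ComplexConjugate

lemma Complex.mul_conj_eq_one_of_norm_eq_one {z : ℂ} (hz : ‖z‖ = 1) : z * conj z = 1 := by
  rw [Complex.mul_conj', hz]
  norm_num

lemma cocycle_eq_mul_conj {G : Type*} [Add G] {Ψ : G → G → ℂ}
    (hmod : ∀ x y : G, ‖Ψ x y‖ = 1)
    (hcoc : ∀ x y z : G, Ψ x (y + z) * Ψ y z = Ψ (x + y) z * Ψ x y) (x y z : G) :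
    Ψ x (y + z) = Ψ (x + y) z * Ψ x y * conj (Ψ y z) := by
  have hunit := Complex.mul_conj_eq_one_of_norm_eq_one (hmod y z)
  linear_combination conj (Ψ y z) * hcoc x y z - Ψ x (y + z) * hunit

theorem star_cocycle_identity_general
    {G : Type*} [AddCommGroup G]
    (Ψ : G → G → ℂ)
    (hmod : ∀ x y : G, ‖Ψ x y‖ = 1)
    (hcoc : ∀ x y z : G, Ψ x (y + z) * Ψ y z = Ψ (x + y) z * Ψ x y)
    (Ψs Ψt : G → G → ℂ)
    (hΨs : ∀ x y : G, Ψs x y = (starRingEnd ℂ) (Ψ x (-x - y)))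
    (hΨt : ∀ x y : G, Ψt x y = (starRingEnd ℂ) (Ψ (-x) (-y))) :
    ∀ x y z : G,
      Ψs x (y + z) = Ψt y z * (starRingEnd ℂ) (Ψt (x + y) z) * Ψs x y := by
  intro x y z
  have key := congrArg conj (cocycle_eq_mul_conj hmod hcoc x (-x - y) (-z))
  rw [show x + (-x - y) = -y by abel, show -x - y + -z = -x - (y + z) by abel] at key
  rw [hΨs, hΨs, hΨt, hΨt, neg_add', Complex.conj_conj, key]
  simp only [map_mul, Complex.conj_conj]
  ring

/-- For a `𝕋`-valued 2-cocycle `Ψ` on an abelian group, with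
`Ψ⋆ (x, y) = conj (Ψ (x, -x - y))` and `Ψ̃ (x, y) = conj (Ψ (-x, -y))`,
one has `Ψ⋆ (x, y + z) = Ψ̃ (y, z) * conj (Ψ̃ (x + y, z)) * Ψ⋆ (x, y)`. -/
theorem star_cocycle_identity
    {G : Type*} [AddCommGroup G]
    (Ψ : G → G → ℂ)
    (hmod : ∀ x y : G, ‖Ψ x y‖ = 1)
    (h0 : ∀ y : G, Ψ 0 y = 1) (h0' : ∀ x : G, Ψ x 0 = 1)
    (hcoc : ∀ x y z : G, Ψ x (y + z) * Ψ y z = Ψ (x + y) z * Ψ x y)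
    (Ψs Ψt : G → G → ℂ)
    (hΨs : ∀ x y : G, Ψs x y = (starRingEnd ℂ) (Ψ x (-x - y)))
    (hΨt : ∀ x y : G, Ψt x y = (starRingEnd ℂ) (Ψ (-x) (-y))) :
    ∀ x y z : G,
      Ψs x (y + z) = Ψt y z * (starRingEnd ℂ) (Ψt (x + y) z) * Ψs x y :=
  star_cocycle_identity_general Ψ hmod hcoc Ψs Ψt hΨs hΨt
end

section
/- Let G be an additively written abelian group and let Ψ : G × G → 𝕋 be a 2-cocycle on G. Define Ψ⋆(x, y) = conj(Ψ(x, −x − y)). Then for all x, y, z ∈ G: conj(Ψ(x, y)) · Ψ⋆(x + y, z) = Ψ⋆(x, z) · Ψ⋆(y, x + z). -/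
theorem star_cocycle_pentagon_identity_general
    {G : Type*} [AddCommGroup G]
    (Ψ : G → G → ℂ)
    (hcoc : ∀ x y z : G, Ψ x (y + z) * Ψ y z = Ψ (x + y) z * Ψ x y)
    (Ψs : G → G → ℂ)
    (hΨs : ∀ x y : G, Ψs x y = (starRingEnd ℂ) (Ψ x (-x - y))) :
    ∀ x y z : G,
      (starRingEnd ℂ) (Ψ x y) * Ψs (x + y) z = Ψs x z * Ψs y (x + z) := by
  intro x y z
  -- The identity is the conjugate of the cocycle identity at `(x, y, -x - y - z)`.
  have hcoc' : Ψ x (-x - z) * Ψ y (-x - y - z) = Ψ (x + y) (-x - y - z) * Ψ x y := by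
    simpa only [show y + (-x - y - z) = -x - z by abel] using hcoc x y (-x - y - z)
  rw [hΨs, hΨs, hΨs, show -(x + y) - z = -x - y - z by abel,
    show -y - (x + z) = -x - y - z by abel, ← map_mul, ← map_mul, hcoc', mul_comm]

/-- For a `𝕋`-valued 2-cocycle `Ψ` on an abelian group, with
`Ψ⋆ (x, y) = conj (Ψ (x, -x - y))`, one has
`conj (Ψ (x, y)) * Ψ⋆ (x + y, z) = Ψ⋆ (x, z) * Ψ⋆ (y, x + z)`. -/
theorem star_cocycle_pentagon_identity
    {G : Type*} [AddCommGroup G]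
    (Ψ : G → G → ℂ)
    (hmod : ∀ x y : G, ‖Ψ x y‖ = 1)
    (h0 : ∀ y : G, Ψ 0 y = 1) (h0' : ∀ x : G, Ψ x 0 = 1)
    (hcoc : ∀ x y z : G, Ψ x (y + z) * Ψ y z = Ψ (x + y) z * Ψ x y)
    (Ψs : G → G → ℂ)
    (hΨs : ∀ x y : G, Ψs x y = (starRingEnd ℂ) (Ψ x (-x - y))) :
    ∀ x y z : G,
      (starRingEnd ℂ) (Ψ x y) * Ψs (x + y) z = Ψs x z * Ψs y (x + z) :=
  star_cocycle_pentagon_identity_general Ψ hcoc Ψs hΨs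
end
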